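/- Let R ∈ ℝ^n be nonincreasing, π any permutation, and z ∈ ℝ^n. Denote by x⁺ and y⁺ the projections of R + z and (π∘R) + z onto the isotonic cone C = {r : r_1 ≥ ... ≥ r_n}. Then for every convex function U, ∑_{i=1}^n U(x⁺_i) ≥ ∑_{i=1}^n U(y⁺_i). -/

import Mathlib

open Finset

/-- Prefix sum of the first `k` coordinates of `x`. -/
def psum {n : ℕ} (x : Fin n → ℝ) (k : ℕ) : ℝ :=
  ∑ i : Fin n, if (i : ℕ) < k then x i else 0

/-- Partial-sum majorization with equal totals: `x ⪰ y`. -/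
def Maj {n : ℕ} (x y : Fin n → ℝ) : Prop :=
  (∀ k, k < n → psum y k ≤ psum x k) ∧ (∑ i, x i = ∑ i, y i)

/-- The isotonic cone `{r : r 0 ≥ r 1 ≥ ... }`. -/
def IsoCone (n : ℕ) : Set (Fin n → ℝ) := {r | Antitone r}

/-- `p` is the Euclidean projection of `y` onto `C`. -/
def IsProj {n : ℕ} (C : Set (Fin n → ℝ)) (y p : Fin n → ℝ) : Prop :=
  p ∈ C ∧ ∀ q ∈ C, ∑ i, (y i - p i) ^ 2 ≤ ∑ i, (y i - q i) ^ 2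

namespace TRBUaux

lemma psum_zero {n : ℕ} (x : Fin n → ℝ) : psum x 0 = 0 := by simp [psum]

lemma psum_of_le {n : ℕ} (x : Fin n → ℝ) {k : ℕ} (h : n ≤ k) : psum x k = ∑ i, x i := by
  unfold psum
  exact Finset.sum_congr rfl fun i _ => if_pos (lt_of_lt_of_le i.isLt h)

lemma psum_succ {n : ℕ} (x : Fin n → ℝ) {k : ℕ} (h : k < n) :
    psum x (k + 1) = psum x k + x ⟨k, h⟩ := by
  unfold psum
  have key : ∀ i : Fin n, (if (i : ℕ) < k + 1 then x i else 0)
      = (if (i : ℕ) < k then x i else 0) + (if i = ⟨k, h⟩ then x i else 0) := by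
    intro i
    by_cases h1 : (i : ℕ) < k
    · rw [if_pos (by omega), if_pos h1,
        if_neg (show ¬i = ⟨k, h⟩ from fun hc => by rw [hc] at h1; simp at h1), add_zero]
    · by_cases h2 : i = ⟨k, h⟩
      · have hik : (i : ℕ) = k := by rw [h2]
        rw [if_pos (by omega), if_neg h1, if_pos h2, zero_add]
      · have h3 : ¬(i : ℕ) < k + 1 := by
          have : (i : ℕ) ≠ k := fun hc => h2 (Fin.ext hc)
          omega
        rw [if_neg h3, if_neg h1, if_neg h2, add_zero]
  rw [Finset.sum_congr rfl fun i _ => key i, Finset.sum_add_distrib]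
  congr 1
  rw [Finset.sum_ite_eq' Finset.univ (⟨k, h⟩ : Fin n) x, if_pos (Finset.mem_univ _)]

lemma psum_add {n : ℕ} (x y : Fin n → ℝ) (k : ℕ) :
    psum (fun i => x i + y i) k = psum x k + psum y k := by
  unfold psum
  rw [← Finset.sum_add_distrib]
  exact Finset.sum_congr rfl fun i _ => by split_ifs <;> simp

lemma psum_sub {n : ℕ} (x y : Fin n → ℝ) (k : ℕ) :
    psum (fun i => x i - y i) k = psum x k - psum y k := by
  unfold psum
  rw [← Finset.sum_sub_distrib]
  exact Finset.sum_congr rfl fun i _ => by split_ifs <;> simp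

/-- Extension of a `Fin n` tuple to `ℕ` by zero. -/
def zext {n : ℕ} (x : Fin n → ℝ) : ℕ → ℝ := fun i => if h : i < n then x ⟨i, h⟩ else 0

lemma sum_zext {n : ℕ} (x : Fin n → ℝ) : ∑ i, x i = ∑ i ∈ Finset.range n, zext x i := by
  rw [← Fin.sum_univ_eq_sum_range]
  exact Finset.sum_congr rfl fun i _ => by simp [zext, i.isLt]

lemma psum_eq_range {n : ℕ} (x : Fin n → ℝ) {k : ℕ} (hk : k ≤ n) :
    psum x k = ∑ i ∈ Finset.range k, zext x i := by
  induction k with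
  | zero => simp [psum_zero]
  | succ k ih =>
      have hkn : k < n := hk
      rw [psum_succ x hkn, Finset.sum_range_succ, ih (le_of_lt hkn)]
      simp [zext, hkn]

/-- Variational inequality for the projection onto the isotonic cone. -/
lemma proj_vi {n : ℕ} {v p : Fin n → ℝ} (hp : IsProj (IsoCone n) v p)
    {q : Fin n → ℝ} (hq : Antitone q) :
    ∑ i, (v i - p i) * (q i - p i) ≤ 0 := by
  set a := ∑ i, (v i - p i) * (q i - p i) with ha
  set B := ∑ i, (q i - p i) ^ 2 with hB
  have hp1 : Antitone p := hp.1
  have hB0 : 0 ≤ B := Finset.sum_nonneg fun i _ => sq_nonneg _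
  have key : ∀ t : ℝ, 0 < t → t ≤ 1 → 2 * t * a ≤ t ^ 2 * B := by
    intro t ht0 ht1
    have hmem : (fun i => p i + t * (q i - p i)) ∈ IsoCone n := by
      intro i j hij
      have h1 := hp1 hij
      have h2 := hq hij
      dsimp only
      nlinarith
    have hle := hp.2 _ hmem
    have expand : ∑ i, (v i - (p i + t * (q i - p i))) ^ 2
        = ∑ i, (v i - p i) ^ 2 - 2 * t * a + t ^ 2 * B := by
      rw [ha, hB, Finset.mul_sum, Finset.mul_sum, ← Finset.sum_sub_distrib,
        ← Finset.sum_add_distrib]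
      exact Finset.sum_congr rfl fun i _ => by ring
    rw [expand] at hle
    linarith
  by_contra hpos
  push_neg at hpos
  rcases eq_or_lt_of_le hB0 with hB1 | hB1
  · have h1 := key 1 one_pos le_rfl
    rw [← hB1] at h1
    nlinarith
  · set t := min 1 (a / B) with ht
    have ht0 : 0 < t := lt_min one_pos (div_pos hpos hB1)
    have ht1 : t ≤ 1 := min_le_left _ _
    have htB : t * B ≤ a := by
      have h2 : t ≤ a / B := min_le_right _ _
      calc t * B ≤ (a / B) * B := by nlinarith
        _ = a := by field_simp
    have h3 := key t ht0 ht1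
    nlinarith

lemma proj_prefix {n : ℕ} {v p : Fin n → ℝ} (hp : IsProj (IsoCone n) v p) (k : ℕ) :
    psum v k ≤ psum p k := by
  have hp1 : Antitone p := hp.1
  have hq : Antitone (fun i : Fin n => p i + (if (i : ℕ) < k then (1 : ℝ) else 0)) := by
    intro i j hij
    have h1 := hp1 hij
    have h2 : (if (j : ℕ) < k then (1 : ℝ) else 0) ≤ (if (i : ℕ) < k then (1 : ℝ) else 0) := by
      have hij' : (i : ℕ) ≤ (j : ℕ) := hij
      split_ifs with ha hb
      · norm_num
      · exfalso; omega
      · norm_num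
      · norm_num
    dsimp only
    linarith
  have hvi := proj_vi hp hq
  have heq : ∑ i, (v i - p i) * ((p i + (if (i : ℕ) < k then (1 : ℝ) else 0)) - p i)
      = psum v k - psum p k := by
    rw [← psum_sub]
    unfold psum
    exact Finset.sum_congr rfl fun i _ => by split_ifs <;> ring
  rw [heq] at hvi
  linarith

lemma proj_total {n : ℕ} {v p : Fin n → ℝ} (hp : IsProj (IsoCone n) v p) :
    ∑ i, p i = ∑ i, v i := by
  have hp1 : Antitone p := hp.1
  have hq1 : Antitone (fun i : Fin n => p i + 1) := fun i j hij => by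
    have := hp1 hij; dsimp only; linarith
  have hq2 : Antitone (fun i : Fin n => p i - 1) := fun i j hij => by
    have := hp1 hij; dsimp only; linarith
  have h1 := proj_vi hp hq1
  have h2 := proj_vi hp hq2
  have e1 : ∑ i, (v i - p i) * ((p i + 1) - p i) = ∑ i, v i - ∑ i, p i := by
    rw [← Finset.sum_sub_distrib]; exact Finset.sum_congr rfl fun i _ => by ring
  have e2 : ∑ i, (v i - p i) * ((p i - 1) - p i) = ∑ i, p i - ∑ i, v i := by
    rw [← Finset.sum_sub_distrib]; exact Finset.sum_congr rfl fun i _ => by ring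
  rw [e1] at h1
  rw [e2] at h2
  linarith

/-- Orthogonality: `⟨v - p, p⟩ = 0` for the projection `p` of `v`. -/
lemma proj_orth {n : ℕ} {v p : Fin n → ℝ} (hp : IsProj (IsoCone n) v p) :
    ∑ i, (v i - p i) * p i = 0 := by
  have hp1 : Antitone p := hp.1
  have hq1 : Antitone (fun i : Fin n => p i + p i) := fun i j hij => by
    have := hp1 hij; dsimp only; linarith
  have hq2 : Antitone (fun _ : Fin n => (0 : ℝ)) := fun i j _ => le_rfl
  have h1 := proj_vi hp hq1
  have h2 := proj_vi hp hq2
  have e1 : ∑ i, (v i - p i) * ((p i + p i) - p i) = ∑ i, (v i - p i) * p i :=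
    Finset.sum_congr rfl fun i _ => by ring
  have e2 : ∑ i, (v i - p i) * ((0 : ℝ) - p i) = -∑ i, (v i - p i) * p i := by
    rw [← Finset.sum_neg_distrib]; exact Finset.sum_congr rfl fun i _ => by ring
  rw [e1] at h1
  rw [e2] at h2
  linarith

/-- Complementarity: where the prefix inequality is strict, `p` is locally constant. -/
lemma proj_compl {n : ℕ} {v p : Fin n → ℝ} (hp : IsProj (IsoCone n) v p)
    {i : ℕ} (hi : i + 1 < n) (hlt : psum v (i + 1) < psum p (i + 1)) :
    p ⟨i + 1, hi⟩ = p ⟨i, by omega⟩ := by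
  classical
  have hpa : Antitone p := hp.1
  set c : ℕ → ℝ := zext p with hc
  set d : ℕ → ℝ := zext (fun j => v j - p j) with hd
  have hS : ∀ k, k ≤ n → ∑ j ∈ Finset.range k, d j = psum v k - psum p k := by
    intro k hk
    rw [hd, ← psum_eq_range (fun j => v j - p j) hk, psum_sub]
  have hSn : ∑ j ∈ Finset.range n, d j = 0 := by
    rw [hS n le_rfl, psum_of_le v le_rfl, psum_of_le p le_rfl, proj_total hp, sub_self]
  have htot : ∑ j ∈ Finset.range n, c j • d j = 0 := by
    have e : ∑ j ∈ Finset.range n, c j • d j = ∑ j : Fin n, (v j - p j) * p j := by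
      rw [sum_zext (fun j : Fin n => (v j - p j) * p j)]
      refine Finset.sum_congr rfl fun j hj => ?_
      rw [Finset.mem_range] at hj
      simp [hc, hd, zext, hj, smul_eq_mul]
      ring
    rw [e, proj_orth hp]
  rw [Finset.sum_range_by_parts, hSn, smul_zero, zero_sub, neg_eq_zero] at htot
  have hterm : ∀ j ∈ Finset.range (n - 1),
      0 ≤ (c (j + 1) - c j) • (∑ l ∈ Finset.range (j + 1), d l) := by
    intro j hj
    rw [Finset.mem_range] at hj
    have hj1 : j + 1 < n := by omega
    have hc1 : c (j + 1) = p ⟨j + 1, hj1⟩ := by simp [hc, zext, hj1]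
    have hc2 : c j = p ⟨j, by omega⟩ := by simp [hc, zext, (by omega : j < n)]
    have hcle : c (j + 1) ≤ c j := by
      rw [hc1, hc2]; exact hpa (Fin.mk_le_mk.2 (by omega))
    have hSle : ∑ l ∈ Finset.range (j + 1), d l ≤ 0 := by
      rw [hS (j + 1) (by omega)]
      have := proj_prefix hp (j + 1)
      linarith
    have := mul_nonneg (sub_nonneg.2 hcle) (neg_nonneg.2 hSle)
    rw [smul_eq_mul]
    nlinarith
  have hzero := (Finset.sum_eq_zero_iff_of_nonneg hterm).1 htot
  have hii : i < n - 1 := by omega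
  have hz := hzero i (Finset.mem_range.2 hii)
  rw [smul_eq_mul, mul_eq_zero] at hz
  rcases hz with h | h
  · have h1 : c (i + 1) = c i := by linarith [sub_eq_zero.1 h]
    have e1 : c (i + 1) = p ⟨i + 1, hi⟩ := by simp [hc, zext, hi]
    have e2 : c i = p ⟨i, by omega⟩ := by simp [hc, zext, (by omega : i < n)]
    rw [e1, e2] at h1
    exact h1
  · exfalso
    rw [hS (i + 1) (by omega)] at h
    linarith

/-- Majorization is preserved by isotonic projection (prefix-sum comparison). -/
lemma prefix_le_of_maj {n : ℕ} {x y px py : Fin n → ℝ}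
    (hx : IsProj (IsoCone n) x px) (hy : IsProj (IsoCone n) y py)
    (hmaj : ∀ k, k ≤ n → psum y k ≤ psum x k)
    (htot : ∑ i, x i = ∑ i, y i) :
    ∀ k, k ≤ n → psum py k ≤ psum px k := by
  classical
  have hpxa : Antitone px := hx.1
  set h : ℕ → ℝ := fun k => psum px k - psum py k with hh
  have hA : ∀ k, k ≤ n → psum y k ≤ psum px k := fun k hk =>
    le_trans (hmaj k hk) (proj_prefix hx k)
  have h0 : h 0 = 0 := by simp [hh, psum_zero]
  have hn : h n = 0 := by
    simp only [hh]
    rw [psum_of_le px le_rfl, psum_of_le py le_rfl, proj_total hx, proj_total hy, htot,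
      sub_self]
  obtain ⟨k0, hk0mem, hk0min⟩ := Finset.exists_min_image (Finset.range (n + 1)) h
    ⟨0, Finset.mem_range.2 (Nat.succ_pos n)⟩
  rw [Finset.mem_range] at hk0mem
  have hmin : ∀ j, j ≤ n → h k0 ≤ h j := fun j hj =>
    hk0min j (Finset.mem_range.2 (by omega))
  have hkey : ∀ k, k ≤ n → h k ≤ h k0 → 0 ≤ h k0 := by
    intro k
    induction k with
    | zero => intro _ hle; rwa [h0] at hle
    | succ k ih =>
        intro hk hle
        by_contra hneg
        push_neg at hneg
        have hhk1 : h (k + 1) < 0 := lt_of_le_of_lt hle hneg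
        have hk1n : k + 1 < n := by
          rcases lt_or_eq_of_le hk with h' | h'
          · exact h'
          · rw [h', hn] at hhk1; linarith
        have hstrict : psum y (k + 1) < psum py (k + 1) := by
          have h1 := hA (k + 1) (by omega)
          simp only [hh] at hhk1
          linarith
        have hconst := proj_compl hy hk1n hstrict
        have e1 : h (k + 2) - h (k + 1) = px ⟨k + 1, hk1n⟩ - py ⟨k + 1, hk1n⟩ := by
          simp only [hh]
          rw [show k + 2 = (k + 1) + 1 from rfl, psum_succ px hk1n, psum_succ py hk1n]
          ring
        have e2 : h (k + 1) - h k = px ⟨k, by omega⟩ - py ⟨k, by omega⟩ := by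
          simp only [hh]
          rw [psum_succ px (by omega : k < n), psum_succ py (by omega : k < n)]
          ring
        have hpx : px ⟨k + 1, hk1n⟩ ≤ px ⟨k, by omega⟩ := hpxa (Fin.mk_le_mk.2 (by omega))
        have hk2 : h k0 ≤ h (k + 2) := hmin (k + 2) (by omega)
        have hkk : h k ≤ h k0 := by
          rw [hconst] at e1
          linarith
        have := ih (by omega) hkk
        linarith
  intro k hk
  have h1 := hkey k0 (by omega) le_rfl
  have h2 := hmin k hk
  have h3 : 0 ≤ h k := le_trans h1 h2
  simp only [hh] at h3
  linarith

/-- Sum over any subset of an antitone tuple is at most the prefix sum of the same size. -/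
lemma sum_subset_le_psum {n : ℕ} {R : Fin n → ℝ} (hR : Antitone R) :
    ∀ s : Finset (Fin n), ∑ j ∈ s, R j ≤ psum R s.card := by
  intro s
  induction s using Finset.strongInduction with
  | _ s ih =>
    rcases Finset.eq_empty_or_nonempty s with rfl | hne
    · simp [psum_zero]
    · set M := s.max' hne with hM
      have hMmem : M ∈ s := s.max'_mem hne
      have hcard1 : 1 ≤ s.card := Finset.card_pos.2 hne
      have hcardn : s.card ≤ n := by
        simpa using Finset.card_le_card (Finset.subset_univ s)
      have hcardM : s.card ≤ (M : ℕ) + 1 := by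
        have himg : s.image Fin.val ⊆ Finset.range ((M : ℕ) + 1) := by
          intro a ha
          rw [Finset.mem_image] at ha
          obtain ⟨j, hj, rfl⟩ := ha
          rw [Finset.mem_range]
          have : j ≤ M := s.le_max' j hj
          omega
        have := Finset.card_le_card himg
        rwa [Finset.card_image_of_injective s Fin.val_injective, Finset.card_range] at this
      obtain ⟨m, hm⟩ : ∃ m, s.card = m + 1 := ⟨s.card - 1, by omega⟩
      have hmn : m < n := by omega
      have hle : (⟨m, hmn⟩ : Fin n) ≤ M := by
        rw [Fin.le_def]
        exact (by omega : m ≤ (M : ℕ))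
      have hRM : R M ≤ R ⟨m, hmn⟩ := hR hle
      have herase := ih (s.erase M) (Finset.erase_ssubset hMmem)
      rw [Finset.card_erase_of_mem hMmem] at herase
      have hm1 : s.card - 1 = m := by omega
      rw [hm1] at herase
      have hsum : ∑ j ∈ s, R j = R M + ∑ j ∈ s.erase M, R j :=
        (Finset.add_sum_erase s R hMmem).symm
      rw [hm, psum_succ R hmn, hsum]
      linarith

/-- The permuted prefix sums are dominated by the sorted ones. -/
lemma psum_perm_le {n : ℕ} {R : Fin n → ℝ} (hR : Antitone R) (π : Equiv.Perm (Fin n))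
    {k : ℕ} (hk : k ≤ n) : psum (fun i => R (π i)) k ≤ psum R k := by
  classical
  have heq : psum (fun i => R (π i)) k
      = ∑ j ∈ (Finset.univ.filter fun i : Fin n => (i : ℕ) < k).image π, R j := by
    unfold psum
    rw [Finset.sum_image (fun a _ b _ hab => π.injective hab), Finset.sum_filter]
  have hcard : ((Finset.univ.filter fun i : Fin n => (i : ℕ) < k).image π).card = k := by
    rw [Finset.card_image_of_injective _ π.injective]
    have hfil : (Finset.univ.filter fun i : Fin n => (i : ℕ) < k)
        = (Finset.univ : Finset (Fin k)).image (Fin.castLE hk) := by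
      ext i
      simp only [Finset.mem_filter, Finset.mem_univ, true_and, Finset.mem_image]
      constructor
      · intro hi
        exact ⟨⟨(i : ℕ), hi⟩, by apply Fin.ext; simp [Fin.castLE]⟩
      · rintro ⟨a, -, rfl⟩
        simp [Fin.castLE]
    rw [hfil, Finset.card_image_of_injective _ (Fin.castLE_injective hk)]
    simp
  rw [heq]
  have h := sum_subset_le_psum hR ((Finset.univ.filter fun i : Fin n => (i : ℕ) < k).image π)
  rwa [hcard] at h

section Subgradient

variable {U : ℝ → ℝ} (hU : ConvexOn ℝ Set.univ U)

/-- Secant slopes. -/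
noncomputable def sl (U : ℝ → ℝ) (a b : ℝ) : ℝ := (U b - U a) / (b - a)

/-- A subgradient of `U` (the right derivative-like infimum of forward slopes). -/
noncomputable def subg (U : ℝ → ℝ) (t : ℝ) : ℝ := sInf (sl U t '' Set.Ioi t)

include hU

lemma sl_adj {a b c : ℝ} (hab : a < b) (hbc : b < c) : sl U a b ≤ sl U b c :=
  hU.slope_mono_adjacent (Set.mem_univ a) (Set.mem_univ c) hab hbc

lemma subg_bddBelow (t : ℝ) : BddBelow (sl U t '' Set.Ioi t) := by
  refine ⟨sl U (t - 1) t, ?_⟩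
  rintro s ⟨u, hu, rfl⟩
  exact sl_adj hU (by linarith) hu

lemma subg_le_sl {t u : ℝ} (htu : t < u) : subg U t ≤ sl U t u :=
  csInf_le (subg_bddBelow hU t) ⟨u, htu, rfl⟩

lemma sl_le_subg {r t : ℝ} (hrt : r < t) : sl U r t ≤ subg U t := by
  refine le_csInf ⟨sl U t (t + 1), ⟨t + 1, by simp, rfl⟩⟩ ?_
  rintro s ⟨u, hu, rfl⟩
  exact sl_adj hU hrt hu

lemma subg_mono : Monotone (subg U) := by
  intro t t' htt'
  rcases eq_or_lt_of_le htt' with rfl | hlt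
  · exact le_rfl
  · exact le_trans (subg_le_sl hU hlt) (sl_le_subg hU hlt)

lemma subg_ineq (t s : ℝ) : U t + subg U t * (s - t) ≤ U s := by
  rcases lt_trichotomy s t with hst | rfl | hst
  · have h1 := sl_le_subg hU hst
    unfold sl at h1
    rw [div_le_iff₀ (by linarith : (0 : ℝ) < t - s)] at h1
    nlinarith
  · simp
  · have h1 := subg_le_sl hU hst
    unfold sl at h1
    rw [le_div_iff₀ (by linarith : (0 : ℝ) < s - t)] at h1
    nlinarith

end Subgradient

end TRBUaux

open TRBUaux

/-- Reporting the true ranking yields a pointwise larger separable convex utility. -/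
theorem true_ranking_better_utility {n : ℕ} (R z : Fin n → ℝ) (hR : Antitone R)
    (π : Equiv.Perm (Fin n)) (xp yp : Fin n → ℝ)
    (hx : IsProj (IsoCone n) (fun i => R i + z i) xp)
    (hy : IsProj (IsoCone n) (fun i => R (π i) + z i) yp)
    (U : ℝ → ℝ) (hU : ConvexOn ℝ Set.univ U) :
    ∑ i, U (yp i) ≤ ∑ i, U (xp i) := by
  classical
  set x : Fin n → ℝ := fun i => R i + z i with hxdef
  set y : Fin n → ℝ := fun i => R (π i) + z i with hydef
  have hypa : Antitone yp := hy.1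
  have htot : ∑ i, x i = ∑ i, y i := by
    simp only [hxdef, hydef]
    rw [Finset.sum_add_distrib, Finset.sum_add_distrib, Equiv.sum_comp π R]
  have hmaj : ∀ k, k ≤ n → psum y k ≤ psum x k := by
    intro k hk
    have h1 : psum y k = psum (fun i => R (π i)) k + psum z k := by
      rw [hydef]; exact psum_add (fun i => R (π i)) z k
    have h2 : psum x k = psum R k + psum z k := by
      rw [hxdef]; exact psum_add R z k
    have h3 := psum_perm_le hR π hk
    linarith
  have hpre : ∀ k, k ≤ n → psum yp k ≤ psum xp k := prefix_le_of_maj hx hy hmaj htot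
  have hsub : ∀ i : Fin n, U (yp i) + subg U (yp i) * (xp i - yp i) ≤ U (xp i) :=
    fun i => subg_ineq hU (yp i) (xp i)
  have hsum : ∑ i, U (yp i) + ∑ i, subg U (yp i) * (xp i - yp i) ≤ ∑ i, U (xp i) := by
    rw [← Finset.sum_add_distrib]
    exact Finset.sum_le_sum fun i _ => hsub i
  suffices hT : 0 ≤ ∑ i, subg U (yp i) * (xp i - yp i) by linarith
  set c : ℕ → ℝ := zext (fun i => subg U (yp i)) with hc
  set d : ℕ → ℝ := zext (fun i => xp i - yp i) with hd
  have hTeq : ∑ i, subg U (yp i) * (xp i - yp i) = ∑ j ∈ Finset.range n, c j • d j := by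
    rw [sum_zext (fun i : Fin n => subg U (yp i) * (xp i - yp i))]
    refine Finset.sum_congr rfl fun j hj => ?_
    rw [Finset.mem_range] at hj
    simp [hc, hd, zext, hj, smul_eq_mul]
  have hSk : ∀ k, k ≤ n → ∑ l ∈ Finset.range k, d l = psum xp k - psum yp k := by
    intro k hk
    rw [hd, ← psum_eq_range (fun i => xp i - yp i) hk, psum_sub]
  have hSn : ∑ l ∈ Finset.range n, d l = 0 := by
    rw [hSk n le_rfl, psum_of_le xp le_rfl, psum_of_le yp le_rfl, proj_total hx,
      proj_total hy, htot, sub_self]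
  rw [hTeq, Finset.sum_range_by_parts, hSn, smul_zero, zero_sub]
  refine neg_nonneg.2 (Finset.sum_nonpos fun j hj => ?_)
  rw [Finset.mem_range] at hj
  have hj1 : j + 1 < n := by omega
  have hc1 : c (j + 1) = subg U (yp ⟨j + 1, hj1⟩) := by simp [hc, zext, hj1]
  have hc2 : c j = subg U (yp ⟨j, by omega⟩) := by simp [hc, zext, (by omega : j < n)]
  have hcle : c (j + 1) ≤ c j := by
    rw [hc1, hc2]
    exact subg_mono hU (hypa (Fin.mk_le_mk.2 (by omega)))
  have hSpos : 0 ≤ ∑ l ∈ Finset.range (j + 1), d l := by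
    rw [hSk (j + 1) (by omega)]
    have := hpre (j + 1) (by omega)
    linarith
  have := mul_nonneg (sub_nonneg.2 hcle) hSpos
  rw [smul_eq_mul]
  nlinarith
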